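/- arXiv:2107.04093 — 2 statements merged into one kernel-verified Lean document; each statement's English description precedes it below -/
import Mathlib

section
/- If s_{2k} = 2 and s_{2k+1} = 3 for all k ∈ ℕ₀, then the Vilenkin function ψ_n is real-valued if and only if the digit n_{2k+1} = 0 for every k ∈ ℕ₀. Equivalently, ⊖n = n iff all odd-indexed digits of n vanish. -/
open MeasureTheory

noncomputable section

/-- `Pprod s k = s 0 * s 1 * ⋯ * s (k-1)`. -/
def Pprod (s : ℕ → ℕ) : ℕ → ℕ
  | 0 => 1
  | k + 1 => Pprod s k * s k

/-- The `k`-th digit of `n` in the mixed-radix expansion determined by `s`. -/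
def digit (s : ℕ → ℕ) (n k : ℕ) : ℕ := (n / Pprod s k) % s k

/-- Digitwise negation `⊖ n`. -/
def oneg (s : ℕ → ℕ) (n : ℕ) : ℕ :=
  ∑ k ∈ Finset.range (n + 1), ((s k - digit s n k) % s k) * Pprod s k

/-- Digitwise addition `n ⊕ m`. -/
def oplus (s : ℕ → ℕ) (n m : ℕ) : ℕ :=
  ∑ k ∈ Finset.range (n + m + 1), ((digit s n k + digit s m k) % s k) * Pprod s k

/-- The complex Vilenkin function `ψ n` on `G = ∏ k, ℤ/(s k)ℤ`. -/
def vil (s : ℕ → ℕ) (n : ℕ) (x : ∀ k, ZMod (s k)) : ℂ :=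
  ∏ k ∈ Finset.range (n + 1),
    Complex.exp (2 * (Real.pi : ℂ) * Complex.I * (digit s n k : ℂ) * ((x k).val : ℂ) / (s k : ℂ))

/-!
Both conditions reduce to `s k ∣ 2 * n_k` for every digit `n_k`. The factor
`exp (2πi n_k x_k / s_k)` of `ψ_n` is real for all `x_k` exactly when it is real for `x_k = 1`,
i.e. when `2 n_k / s_k` is an integer; and `⊖n = n` means, by uniqueness of mixed-radix digits,
that each digit is its own negative modulo `s_k`. For `s_k = 2` the divisibility always holds,
while for `s_k = 3` it forces `n_k = 0`.
-/

open Complex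
open scoped Real

variable {s : ℕ → ℕ}

lemma Pprod_pos (hs : ∀ k, 0 < s k) (k : ℕ) : 0 < Pprod s k := by
  induction k with
  | zero => exact Nat.one_pos
  | succ k ih => exact Nat.mul_pos ih (hs k)

lemma lt_Pprod (hs : ∀ k, 2 ≤ s k) (k : ℕ) : k < Pprod s k := by
  induction k with
  | zero => exact Nat.one_pos
  | succ k ih =>
    have := hs k
    simp only [Pprod]
    nlinarith

lemma Pprod_dvd_Pprod {j m : ℕ} (h : j ≤ m) : Pprod s j ∣ Pprod s m := by
  induction m, h using Nat.le_induction with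
  | base => exact dvd_rfl
  | succ m _ ih => exact Dvd.dvd.mul_right ih (s m)

lemma digit_lt (hs : ∀ k, 0 < s k) (n k : ℕ) : digit s n k < s k :=
  Nat.mod_lt _ (hs k)

lemma digit_eq_zero_of_lt_Pprod {n k : ℕ} (h : n < Pprod s k) : digit s n k = 0 := by
  rw [digit, Nat.div_eq_of_lt h, Nat.zero_mod]

lemma digit_eq_zero_of_lt (hs : ∀ k, 2 ≤ s k) {n k : ℕ} (h : n < k) : digit s n k = 0 :=
  digit_eq_zero_of_lt_Pprod (h.trans (lt_Pprod hs k))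

lemma sum_digit_mul_Pprod (n m : ℕ) :
    ∑ k ∈ Finset.range m, digit s n k * Pprod s k = n % Pprod s m := by
  induction m with
  | zero => simp [Pprod, Nat.mod_one]
  | succ m ih =>
    rw [Finset.sum_range_succ, ih]
    have h := Nat.div_add_mod (n % (Pprod s m * s m)) (Pprod s m)
    rw [Nat.mod_mul_right_div_self, Nat.mod_mul_right_mod, mul_comm (Pprod s m)] at h
    rw [Pprod, digit, ← h]
    ring

lemma sum_digit_mul_Pprod_self (hs : ∀ k, 2 ≤ s k) (n : ℕ) :
    ∑ k ∈ Finset.range (n + 1), digit s n k * Pprod s k = n := by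
  rw [sum_digit_mul_Pprod]
  exact Nat.mod_eq_of_lt ((Nat.lt_succ_self n).trans (lt_Pprod hs (n + 1)))

lemma sum_mul_Pprod_lt {f : ℕ → ℕ} (hf : ∀ k, f k < s k) (m : ℕ) :
    ∑ k ∈ Finset.range m, f k * Pprod s k < Pprod s m := by
  induction m with
  | zero => exact Nat.one_pos
  | succ m ih =>
    rw [Finset.sum_range_succ, Pprod]
    nlinarith [hf m]

lemma digit_add_mul_Pprod (hs : ∀ k, 0 < s k) {j m : ℕ} (hjm : j < m) (a c : ℕ) :
    digit s (a + c * Pprod s m) j = digit s a j := by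
  obtain ⟨q, hq⟩ := Pprod_dvd_Pprod (s := s) hjm
  rw [digit, digit, hq, Pprod, show c * (Pprod s j * s j * q) = Pprod s j * (s j * (q * c)) by ring,
    Nat.add_mul_div_left _ _ (Pprod_pos hs j), Nat.add_mul_mod_self_left]

lemma digit_add_mul_Pprod_self {a c m : ℕ} (ha : a < Pprod s m) (hc : c < s m) :
    digit s (a + c * Pprod s m) m = c := by
  rw [digit, Nat.add_mul_div_right _ _ ((Nat.zero_le a).trans_lt ha), Nat.div_eq_of_lt ha,
    zero_add, Nat.mod_eq_of_lt hc]

lemma digit_sum_mul_Pprod {f : ℕ → ℕ} (hf : ∀ k, f k < s k) {j m : ℕ} (hj : j < m) :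
    digit s (∑ k ∈ Finset.range m, f k * Pprod s k) j = f j := by
  induction m with
  | zero => omega
  | succ m ih =>
    rw [Finset.sum_range_succ]
    rcases Nat.lt_succ_iff_lt_or_eq.1 hj with hjm | rfl
    · rw [digit_add_mul_Pprod (fun k => (Nat.zero_le _).trans_lt (hf k)) hjm, ih hjm]
    · exact digit_add_mul_Pprod_self (sum_mul_Pprod_lt hf j) (hf j)

lemma sum_mul_Pprod_inj {f g : ℕ → ℕ} (hf : ∀ k, f k < s k) (hg : ∀ k, g k < s k) (m : ℕ) :
    ∑ k ∈ Finset.range m, f k * Pprod s k = ∑ k ∈ Finset.range m, g k * Pprod s k ↔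
      ∀ k < m, f k = g k := by
  refine ⟨fun h k hk => ?_, fun h => Finset.sum_congr rfl fun k hk => ?_⟩
  · rw [← digit_sum_mul_Pprod hf hk, h, digit_sum_mul_Pprod hg hk]
  · rw [h k (Finset.mem_range.1 hk)]

lemma sub_mod_eq_self_iff_dvd_two_mul {a d : ℕ} (h : d < a) : (a - d) % a = d ↔ a ∣ 2 * d := by
  rcases Nat.eq_zero_or_pos d with rfl | hd
  · simp
  rw [Nat.mod_eq_of_lt (by omega)]
  constructor
  · exact fun had => ⟨1, by omega⟩
  · rintro ⟨c, hc⟩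
    rcases c with _ | _ | c
    · omega
    · omega
    · nlinarith

theorem oneg_eq_self_iff (hs : ∀ k, 2 ≤ s k) (n : ℕ) :
    oneg s n = n ↔ ∀ k, s k ∣ 2 * digit s n k := by
  have hs₀ : ∀ k, 0 < s k := fun k => Nat.zero_lt_of_lt (hs k)
  calc oneg s n = n
      ↔ oneg s n = ∑ k ∈ Finset.range (n + 1), digit s n k * Pprod s k := by
        rw [sum_digit_mul_Pprod_self hs]
    _ ↔ ∀ k < n + 1, (s k - digit s n k) % s k = digit s n k :=
        sum_mul_Pprod_inj (fun k => Nat.mod_lt _ (hs₀ k)) (digit_lt hs₀ n) _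
    _ ↔ ∀ k, s k ∣ 2 * digit s n k := by
        refine forall_congr' fun k => ?_
        rw [← sub_mod_eq_self_iff_dvd_two_mul (digit_lt hs₀ n k)]
        by_cases hk : k < n + 1
        · exact ⟨fun h => h hk, fun h _ => h⟩
        · simp [hk, digit_eq_zero_of_lt hs (Nat.not_lt.1 hk)]

lemma im_exp_two_pi_I_mul_div_eq_zero_iff {s : ℕ} (hs : s ≠ 0) (m : ℕ) :
    (exp (2 * π * I * m / s)).im = 0 ↔ s ∣ 2 * m := by
  have hs' : (s : ℝ) ≠ 0 := Nat.cast_ne_zero.2 hs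
  rw [show 2 * (π : ℂ) * I * m / s = ((2 * π * m / s : ℝ) : ℂ) * I by push_cast; ring,
    exp_ofReal_mul_I_im, Real.sin_eq_zero_iff, ← Int.natCast_dvd_natCast]
  refine exists_congr fun k => ?_
  rw [eq_div_iff hs', ← Int.cast_inj (α := ℝ)]
  push_cast
  constructor <;> intro h <;> nlinarith [Real.pi_pos]

lemma vil_single {n j : ℕ} (hs : 1 < s j) (hj : j ≤ n) :
    vil s n (Pi.single j 1) = exp (2 * π * I * digit s n j / s j) := by
  have : Fact (1 < s j) := ⟨hs⟩
  rw [vil, Finset.prod_eq_single j]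
  · rw [Pi.single_eq_same, ZMod.val_one, Nat.cast_one, mul_one]
  · intro k _ hkj
    rw [Pi.single_eq_of_ne hkj, ZMod.val_zero, Nat.cast_zero, mul_zero, zero_div, exp_zero]
  · exact fun hj' => absurd (Finset.mem_range.2 (Nat.lt_succ_of_le hj)) hj'

theorem forall_im_vil_eq_zero_iff (hs : ∀ k, 2 ≤ s k) (n : ℕ) :
    (∀ x : ∀ k, ZMod (s k), (vil s n x).im = 0) ↔ ∀ k, s k ∣ 2 * digit s n k := by
  have hs₀ : ∀ k, s k ≠ 0 := fun k => (Nat.zero_lt_of_lt (hs k)).ne'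
  constructor
  · intro h k
    rcases le_or_gt k n with hk | hk
    · rw [← im_exp_two_pi_I_mul_div_eq_zero_iff (hs₀ k), ← vil_single (hs k) hk]
      exact h _
    · rw [digit_eq_zero_of_lt hs hk]
      exact dvd_zero _
  · intro h x
    rw [← conj_eq_iff_im, vil, map_prod]
    refine Finset.prod_congr rfl fun k _ => conj_eq_iff_im.2 ?_
    rw [show 2 * (π : ℂ) * I * (digit s n k : ℂ) * ((x k).val : ℂ) / (s k : ℂ)
        = 2 * π * I * ((digit s n k * (x k).val : ℕ) : ℂ) / (s k : ℂ) by push_cast; ring,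
      im_exp_two_pi_I_mul_div_eq_zero_iff (hs₀ k), ← mul_assoc]
    exact (h k).mul_right _

abbrev radix23 : ℕ → ℕ := fun j => if j % 2 = 0 then 2 else 3

lemma two_le_radix23 (k : ℕ) : 2 ≤ radix23 k := by
  unfold radix23
  split <;> omega

lemma forall_radix23_dvd_two_mul_digit_iff (n : ℕ) :
    (∀ k, radix23 k ∣ 2 * digit radix23 n k) ↔ ∀ k, digit radix23 n (2 * k + 1) = 0 := by
  constructor
  · intro h k
    have hdvd := h (2 * k + 1)
    have hlt := digit_lt (fun k => Nat.zero_lt_of_lt (two_le_radix23 k)) n (2 * k + 1)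
    have h3 : radix23 (2 * k + 1) = 3 := if_neg (by omega)
    rw [h3] at hdvd hlt
    omega
  · intro h k
    rcases Nat.even_or_odd' k with ⟨m, rfl | rfl⟩
    · simp [radix23]
    · rw [h m]
      exact dvd_zero _

theorem vilenkin_realValued_iff_odd_digits_vanish (n : ℕ) :
    ((∀ x : ∀ k, ZMod ((fun j : ℕ => if j % 2 = 0 then 2 else 3) k),
        (vil (fun j => if j % 2 = 0 then 2 else 3) n x).im = 0) ↔
      ∀ k : ℕ, digit (fun j => if j % 2 = 0 then 2 else 3) n (2 * k + 1) = 0) ∧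
    (oneg (fun j => if j % 2 = 0 then 2 else 3) n = n ↔
      ∀ k : ℕ, digit (fun j => if j % 2 = 0 then 2 else 3) n (2 * k + 1) = 0) :=
  ⟨(forall_im_vil_eq_zero_iff two_le_radix23 n).trans (forall_radix23_dvd_two_mul_digit_iff n),
    (oneg_eq_self_iff two_le_radix23 n).trans (forall_radix23_dvd_two_mul_digit_iff n)⟩
end
end

section
/- Let d, r > 0 with r ≤ 1, and for k ∈ ℕ define g : (0,∞) → ℝ by g(x) = −k·x^{−d} − x^r. Then g attains its absolute maximum at x_k = (d/r)^{1/(d+r)} k^{1/(d+r)}, and with C₁ = (d+r)·d^{−d/(d+r)}·r^{−r/(d+r)} and C₂ = r^{(d+1)/(d+r)}·d^{(r−1)/(d+r)} one has, for every integer N with x_k ≤ N ≤ x_k + 1: −C₁ k^{r/(d+r)} − C₂ k^{(r−1)/(d+r)} ≤ g(N) ≤ sup_{m∈ℕ} g(m) ≤ g(x_k) = −C₁ k^{r/(d+r)}. -/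
noncomputable section

/-- `g(x) = -k·x^{-d} - x^r`. -/
def gInf (d : ℕ) (r : ℝ) (k : ℕ) (x : ℝ) : ℝ :=
  -(k : ℝ) * x ^ (-(d : ℝ)) - x ^ r

/-- The maximizer `x_k = (d/r)^{1/(d+r)} k^{1/(d+r)}`. -/
def xkInf (d : ℕ) (r : ℝ) (k : ℕ) : ℝ :=
  ((d : ℝ) / r) ^ (1 / ((d : ℝ) + r)) * (k : ℝ) ^ (1 / ((d : ℝ) + r))

/-- `C₁ = (d+r)·d^{-d/(d+r)}·r^{-r/(d+r)}`. -/
def C1Inf (d : ℕ) (r : ℝ) : ℝ :=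
  ((d : ℝ) + r) * (d : ℝ) ^ (-(d : ℝ) / ((d : ℝ) + r)) * r ^ (-r / ((d : ℝ) + r))

/-- `C₂ = r^{(d+1)/(d+r)}·d^{(r-1)/(d+r)}`. -/
def C2Inf (d : ℕ) (r : ℝ) : ℝ :=
  r ^ (((d : ℝ) + 1) / ((d : ℝ) + r)) * (d : ℝ) ^ ((r - 1) / ((d : ℝ) + r))

/-! The maximizer `x_k` is the critical point of `g`: `x_k^{d+r} = (d/r)·k`. Writing
`k = (r/d)·x_k^{d+r}` and `t = x/x_k`, the inequality `g(x) ≤ g(x_k)` becomes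
`d + r ≤ r·t^{-d} + d·t^r`, which is weighted AM-GM. For `x_k ≤ N ≤ x_k + 1` the term `-k·N^{-d}`
only increases, while concavity of `x ↦ x^r` gives `(x_k+1)^r ≤ x_k^r + r·x_k^{r-1}`, and
`r·x_k^{r-1} = C₂·k^{(r-1)/(d+r)}`. -/

open Real

/-- Weighted AM-GM for `t^{-D}` and `t^r` with weights `r/(D+r)`, `D/(D+r)`, for which the
geometric mean is `1`. -/
theorem add_le_mul_rpow_neg_add_mul_rpow {D r t : ℝ} (hD : 0 < D) (hr : 0 < r) (ht : 0 < t) :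
    D + r ≤ r * t ^ (-D) + D * t ^ r := by
  have hs : 0 < D + r := by positivity
  have amgm := geom_mean_le_arith_mean2_weighted (div_pos hr hs).le (div_pos hD hs).le
    (rpow_pos_of_pos ht (-D)).le (rpow_pos_of_pos ht r).le
    (by field_simp; ring : r / (D + r) + D / (D + r) = 1)
  have hgeom : (t ^ (-D)) ^ (r / (D + r)) * (t ^ r) ^ (D / (D + r)) = 1 := by
    rw [← rpow_mul ht.le, ← rpow_mul ht.le, ← rpow_add ht]
    convert rpow_zero t using 2
    ring
  rw [hgeom] at amgm
  calc D + r = (D + r) * 1 := (mul_one _).symm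
    _ ≤ (D + r) * (r / (D + r) * t ^ (-D) + D / (D + r) * t ^ r) := by gcongr
    _ = r * t ^ (-D) + D * t ^ r := by field_simp

theorem mul_rpow_add_le_mul_rpow_neg_add_rpow {D r x₀ x : ℝ} (hD : 0 < D) (hr : 0 < r)
    (hx₀ : 0 < x₀) (hx : 0 < x) :
    (D + r) / D * x₀ ^ r ≤ r / D * x₀ ^ (D + r) * x ^ (-D) + x ^ r := by
  have key := add_le_mul_rpow_neg_add_mul_rpow hD hr (div_pos hx hx₀)
  have hsplit : x₀ ^ (D + r) * x ^ (-D) = x₀ ^ r * (x / x₀) ^ (-D) := by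
    rw [div_rpow hx.le hx₀.le, rpow_add hx₀, rpow_neg hx₀.le, rpow_neg hx.le]
    field_simp
  have hpow : x ^ r = x₀ ^ r * (x / x₀) ^ r := by
    rw [div_rpow hx.le hx₀.le]
    field_simp
  rw [mul_assoc, hsplit, hpow]
  calc (D + r) / D * x₀ ^ r ≤ (r * (x / x₀) ^ (-D) + D * (x / x₀) ^ r) / D * x₀ ^ r := by
        gcongr
    _ = _ := by field_simp

theorem add_one_rpow_le {x r : ℝ} (hx : 0 < x) (hr : 0 ≤ r) (hr1 : r ≤ 1) :
    (x + 1) ^ r ≤ x ^ r + r * x ^ (r - 1) := by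
  have hbern : (1 + x⁻¹) ^ r ≤ 1 + r * x⁻¹ :=
    rpow_one_add_le_one_add_mul_self (by linarith [inv_pos.mpr hx]) hr hr1
  calc (x + 1) ^ r = x ^ r * (1 + x⁻¹) ^ r := by
        rw [← mul_rpow hx.le (by positivity), mul_add, mul_inv_cancel₀ hx.ne', mul_one]
    _ ≤ x ^ r * (1 + r * x⁻¹) := by gcongr
    _ = x ^ r + r * x ^ (r - 1) := by
        rw [rpow_sub_one hx.ne']
        ring

theorem gInf_sub_le_gInf {d : ℕ} {r : ℝ} (k : ℕ) (hr : 0 ≤ r) (hr1 : r ≤ 1) {x₀ x : ℝ}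
    (hx₀ : 0 < x₀) (hx₀x : x₀ ≤ x) (hxx₀ : x ≤ x₀ + 1) :
    gInf d r k x₀ - r * x₀ ^ (r - 1) ≤ gInf d r k x := by
  have hneg : x ^ (-(d : ℝ)) ≤ x₀ ^ (-(d : ℝ)) :=
    rpow_le_rpow_of_nonpos hx₀ hx₀x (neg_nonpos.mpr d.cast_nonneg)
  have hpos : x ^ r ≤ (x₀ + 1) ^ r := rpow_le_rpow (hx₀.trans_le hx₀x).le hxx₀ hr
  have := mul_le_mul_of_nonneg_left hneg k.cast_nonneg
  unfold gInf
  linarith [add_one_rpow_le hx₀ hr hr1]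

section

variable {d : ℕ} {r : ℝ} {k : ℕ}

theorem xkInf_rpow (hd : 0 < d) (hr : 0 < r) (c : ℝ) :
    xkInf d r k ^ c = ((d : ℝ) / r) ^ (c / (d + r)) * (k : ℝ) ^ (c / (d + r)) := by
  rw [xkInf, mul_rpow (by positivity) (by positivity), ← rpow_mul (by positivity),
    ← rpow_mul (by positivity), one_div_mul_eq_div]

theorem xkInf_pos (hd : 0 < d) (hr : 0 < r) (hk : 0 < k) : 0 < xkInf d r k := by
  unfold xkInf
  positivity

/-- `x_k` solves the critical-point equation `d·k·x^{-d-1} = r·x^{r-1}` of `g`. -/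
theorem xkInf_rpow_add (hd : 0 < d) (hr : 0 < r) :
    xkInf d r k ^ ((d : ℝ) + r) = (d : ℝ) / r * k := by
  have hs : (d : ℝ) + r ≠ 0 := by positivity
  rw [xkInf_rpow hd hr, div_self hs, rpow_one, rpow_one]

theorem natCast_mul_xkInf_rpow_neg (hd : 0 < d) (hr : 0 < r) (hk : 0 < k) :
    (k : ℝ) * xkInf d r k ^ (-(d : ℝ)) = r / d * xkInf d r k ^ r := by
  have hx := xkInf_pos hd hr hk
  have hcrit := xkInf_rpow_add (k := k) hd hr
  rw [rpow_add hx, div_mul_eq_mul_div, eq_div_iff hr.ne'] at hcrit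
  have hd' : (0 : ℝ) < d := by exact_mod_cast hd
  rw [rpow_neg hx.le]
  field_simp
  linear_combination -hcrit

theorem gInf_xkInf_eq (hd : 0 < d) (hr : 0 < r) (hk : 0 < k) :
    gInf d r k (xkInf d r k) = -(((d : ℝ) + r) / d * xkInf d r k ^ r) := by
  have hd' : (0 : ℝ) < d := by exact_mod_cast hd
  rw [gInf, neg_mul, natCast_mul_xkInf_rpow_neg hd hr hk]
  field_simp
  ring

theorem gInf_le_gInf_xkInf (hd : 0 < d) (hr : 0 < r) (hk : 0 < k) {x : ℝ} (hx : 0 < x) :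
    gInf d r k x ≤ gInf d r k (xkInf d r k) := by
  have hd' : (0 : ℝ) < d := by exact_mod_cast hd
  have hk_eq : (k : ℝ) = r / d * xkInf d r k ^ ((d : ℝ) + r) := by
    rw [xkInf_rpow_add hd hr]
    field_simp
  rw [gInf_xkInf_eq hd hr hk, gInf, hk_eq]
  linarith [mul_rpow_add_le_mul_rpow_neg_add_rpow hd' hr (xkInf_pos hd hr hk) hx]

theorem gInf_xkInf (hd : 0 < d) (hr : 0 < r) (hk : 0 < k) :
    gInf d r k (xkInf d r k) = -C1Inf d r * (k : ℝ) ^ (r / ((d : ℝ) + r)) := by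
  have hd' : (0 : ℝ) < d := by exact_mod_cast hd
  have hs : (d : ℝ) + r ≠ 0 := by positivity
  have hexp : -(d : ℝ) / (d + r) = r / (d + r) - 1 := by field_simp; ring
  rw [gInf_xkInf_eq hd hr hk, xkInf_rpow hd hr, C1Inf, div_rpow hd'.le hr.le, hexp,
    rpow_sub_one hd'.ne', neg_div, rpow_neg hr.le]
  field_simp

theorem C2Inf_mul (hd : 0 < d) (hr : 0 < r) :
    C2Inf d r * (k : ℝ) ^ ((r - 1) / ((d : ℝ) + r)) = r * xkInf d r k ^ (r - 1) := by
  have hd' : (0 : ℝ) < d := by exact_mod_cast hd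
  have hs : (d : ℝ) + r ≠ 0 := by positivity
  have hexp : ((d : ℝ) + 1) / (d + r) = 1 - (r - 1) / (d + r) := by field_simp; ring
  rw [xkInf_rpow hd hr, C2Inf, div_rpow hd'.le hr.le, hexp, rpow_sub hr, rpow_one]
  field_simp

end

theorem max_of_aux_function_infinite (d : ℕ) (r : ℝ) (hd : 0 < d) (hr : 0 < r)
    (hr1 : r ≤ 1) (k : ℕ) (hk : 1 ≤ k) :
    (∀ x : ℝ, 0 < x → gInf d r k x ≤ gInf d r k (xkInf d r k)) ∧
    gInf d r k (xkInf d r k) = -C1Inf d r * (k : ℝ) ^ (r / ((d : ℝ) + r)) ∧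
    (∀ m : ℕ, 0 < m → gInf d r k (m : ℝ) ≤ gInf d r k (xkInf d r k)) ∧
    (∀ N : ℕ, xkInf d r k ≤ (N : ℝ) → (N : ℝ) ≤ xkInf d r k + 1 →
      -C1Inf d r * (k : ℝ) ^ (r / ((d : ℝ) + r)) -
          C2Inf d r * (k : ℝ) ^ ((r - 1) / ((d : ℝ) + r)) ≤ gInf d r k (N : ℝ)) := by
  have hmax := fun x (hx : 0 < x) => gInf_le_gInf_xkInf (k := k) hd hr hk hx
  refine ⟨hmax, gInf_xkInf hd hr hk, fun m hm => hmax m (Nat.cast_pos.mpr hm), ?_⟩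
  intro N hxN hNx
  rw [← gInf_xkInf hd hr hk, C2Inf_mul hd hr]
  exact gInf_sub_le_gInf k hr.le hr1 (xkInf_pos hd hr hk) hxN hNx
end
end
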